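/- arXiv:2512.22347 — 7 statements merged into one kernel-verified Lean document; each statement's English description precedes it below -/
import Mathlib

section
/- Let Φ₀, Φ₁ be random elements of a measurable space X, let g : X → 𝕊 be measurable with S = g(Φ₀) and S⁺ = g(Φ₁), and let U be a {0,1}-valued random variable independent of (Φ₀, Φ₁) with p₁ = P(U = 1). Let ψ⁽⁰⁾ : 𝕊 → ℝ^{d₀}, ψ⁽¹⁾ : 𝕊 → ℝ^{d₁} be measurable with ψ⁽ⁱ⁾(S), ψ⁽ⁱ⁾(S⁺) square-integrable, let c∘, c• : X → ℝ with c∘(Φ₀), c•(Φ₀) square-integrable, set c(x,u) = (1−u)c∘(x) + u c•(x), and fix γ ∈ (0,1]. Write ψ(s,u) = [(1−u)ψ⁽⁰⁾(s) ; u ψ⁽¹⁾(s)] and, for θ = [θ⁰ ; θ¹] ∈ ℝ^{d₀+d₁}, define the mean-flow vector field f̄(θ) = E[ ψ(S,U) ( −θᵀψ(S,U) + c(Φ₀,U) + γ(1−U) min{ (θ⁰)ᵀψ⁽⁰⁾(S⁺), (θ¹)ᵀψ⁽¹⁾(S⁺) } ) ]. Then the block of f̄(θ) consisting of its last d₁ coordinates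 equals p₁ ( −R₍₁₎ θ¹ + E[ψ⁽¹⁾(S) c•(Φ₀)] ), where R₍₁₎ = E[ψ⁽¹⁾(S) ψ⁽¹⁾(S)ᵀ]; in particular this block is affine in θ¹ and does not depend on θ⁰ or on γ. -/
/-! Since `U ∈ {0,1}`, the factor `U (1 - U)` vanishes, so the `θ¹`-block of the integrand is
`U · H(Φ₀)` with `H x = ψ⁽¹⁾(g x) (−θ¹ᵀψ⁽¹⁾(g x) + c•(x))`: the `θ⁰`-features, `c∘` and the
discounted minimum all disappear. Independence of `U` and `Φ₀` factors the expectation as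
`p₁ · E[H(Φ₀)]`, and expanding `H` under the square-integrability assumptions gives the
affine form. -/

open MeasureTheory ProbabilityTheory

section

variable {Ω : Type*} [MeasurableSpace Ω] {μ : Measure Ω}

lemma integral_eq_measureReal_of_forall_eq_zero_or_eq_one {U : Ω → ℝ} (hU : Measurable U)
    (hU01 : ∀ ω, U ω = 0 ∨ U ω = 1) :
    ∫ ω, U ω ∂μ = μ.real {ω | U ω = 1} := by
  have hU_eq : ∀ ω, U ω = {ω | U ω = 1}.indicator 1 ω := fun ω => by
    rcases hU01 ω with h | h <;> simp [h]
  rw [integral_congr_ae (ae_of_all _ hU_eq),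
    integral_indicator_one (measurableSet_eq_fun hU measurable_const)]

lemma memLp_two_apply_of_integrable_sq_norm {ι : Type*} [Fintype ι] {v : Ω → ι → ℝ}
    (hv : AEStronglyMeasurable v μ) (hv2 : Integrable (fun ω => ‖v ω‖ ^ 2) μ) (i : ι) :
    MemLp (fun ω => v ω i) 2 μ :=
  ((memLp_two_iff_integrable_sq_norm hv).2 hv2).eval i

lemma integral_mul_neg_sum_mul_add {ι : Type*} [Fintype ι] {v : Ω → ι → ℝ} {w : Ω → ℝ}
    (hv : ∀ k, MemLp (fun ω => v ω k) 2 μ) (hw : MemLp w 2 μ) (θ : ι → ℝ) (j : ι) :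
    ∫ ω, v ω j * (-(∑ k, θ k * v ω k) + w ω) ∂μ
      = -(∑ k, (∫ ω, v ω j * v ω k ∂μ) * θ k) + ∫ ω, v ω j * w ω ∂μ := by
  have hvv : ∀ k, Integrable (fun ω => v ω j * v ω k) μ := fun k => (hv j).integrable_mul (hv k)
  have hvw : Integrable (fun ω => v ω j * w ω) μ := (hv j).integrable_mul hw
  have hexpand : ∀ ω, v ω j * (-(∑ k, θ k * v ω k) + w ω)
      = -(∑ k, v ω j * v ω k * θ k) + v ω j * w ω := fun ω => by
    rw [mul_add, mul_neg, Finset.mul_sum]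
    congr 2
    exact Finset.sum_congr rfl fun k _ => by ring
  simp_rw [hexpand]
  rw [integral_add (integrable_finsetSum _ fun k _ => (hvv k).mul_const _).fun_neg hvw,
    integral_neg, integral_finsetSum _ fun k _ => (hvv k).mul_const _]
  simp_rw [integral_mul_const]

end

lemma separable_inr_mul_temporalDifference {ι₀ ι₁ : Type*} [Fintype ι₀] [Fintype ι₁]
    (v₀ : ι₀ → ℝ) (v₁ : ι₁ → ℝ) (θ₀ : ι₀ → ℝ) (θ₁ : ι₁ → ℝ) {u : ℝ} (hu : u = 0 ∨ u = 1)
    (a b γ m : ℝ) (j : ι₁) :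
    u * v₁ j * (-(∑ k, Sum.elim θ₀ θ₁ k * Sum.elim (fun i => (1 - u) * v₀ i) (fun i => u * v₁ i) k)
        + ((1 - u) * a + u * b) + γ * (1 - u) * m)
      = u * (v₁ j * (-(∑ k, θ₁ k * v₁ k) + b)) := by
  rcases hu with rfl | rfl <;> simp [Fintype.sum_sum_type]

theorem stmt_1_general
    {Ω X 𝕊 : Type*} [MeasurableSpace Ω] [MeasurableSpace X] [MeasurableSpace 𝕊]
    (P : Measure Ω)
    {d₀ d₁ : ℕ}
    (Φ0 Φ1 : Ω → X) (g : X → 𝕊) (U : Ω → ℝ)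
    (hΦ0 : Measurable Φ0) (hg : Measurable g) (hU : Measurable U)
    (hU01 : ∀ ω, U ω = 0 ∨ U ω = 1)
    (hindep : IndepFun (fun ω => (Φ0 ω, Φ1 ω)) U P)
    (ψ0 : 𝕊 → Fin d₀ → ℝ) (ψ1 : 𝕊 → Fin d₁ → ℝ)
    (hψ1 : Measurable ψ1)
    (hint10 : Integrable (fun ω => ‖ψ1 (g (Φ0 ω))‖ ^ 2) P)
    (ccirc cbull : X → ℝ) (hcbull : Measurable cbull)
    (hc2' : Integrable (fun ω => (cbull (Φ0 ω)) ^ 2) P)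
    (c : X → ℝ → ℝ)
    (hc : ∀ x u, c x u = (1 - u) * ccirc x + u * cbull x)
    (γ : ℝ)
    (ψ : 𝕊 → ℝ → (Fin d₀ ⊕ Fin d₁) → ℝ)
    (hψ : ∀ s u, ψ s u = Sum.elim (fun i => (1 - u) * ψ0 s i) (fun j => u * ψ1 s j))
    (p1 : ℝ) (hp1 : p1 = (P {ω | U ω = 1}).toReal)
    (R1 : Matrix (Fin d₁) (Fin d₁) ℝ)
    (hR1 : ∀ i j, R1 i j = ∫ ω, ψ1 (g (Φ0 ω)) i * ψ1 (g (Φ0 ω)) j ∂P)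
    (fbar : (Fin d₀ → ℝ) → (Fin d₁ → ℝ) → (Fin d₀ ⊕ Fin d₁) → ℝ)
    (hfbar : ∀ θ0 θ1 a, fbar θ0 θ1 a =
      ∫ ω, ψ (g (Φ0 ω)) (U ω) a *
        (-(∑ b, Sum.elim θ0 θ1 b * ψ (g (Φ0 ω)) (U ω) b) + c (Φ0 ω) (U ω)
          + γ * (1 - U ω) *
            min (∑ i, θ0 i * ψ0 (g (Φ1 ω)) i) (∑ j, θ1 j * ψ1 (g (Φ1 ω)) j)) ∂P) :
    ∀ (θ0 : Fin d₀ → ℝ) (θ1 : Fin d₁ → ℝ) (j : Fin d₁),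
      fbar θ0 θ1 (Sum.inr j) =
        p1 * (-(∑ k, R1 j k * θ1 k) + ∫ ω, ψ1 (g (Φ0 ω)) j * cbull (Φ0 ω) ∂P) := by
  intro θ0 θ1 j
  set H : X → ℝ := fun x => ψ1 (g x) j * (-(∑ k, θ1 k * ψ1 (g x) k) + cbull x)
  have hH : Measurable H := by fun_prop
  have hintegrand : ∀ ω, ψ (g (Φ0 ω)) (U ω) (Sum.inr j) *
      (-(∑ b, Sum.elim θ0 θ1 b * ψ (g (Φ0 ω)) (U ω) b) + c (Φ0 ω) (U ω)
        + γ * (1 - U ω) *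
          min (∑ i, θ0 i * ψ0 (g (Φ1 ω)) i) (∑ k, θ1 k * ψ1 (g (Φ1 ω)) k))
      = U ω * H (Φ0 ω) := fun ω => by
    simp only [hψ, hc, Sum.elim_inr]
    exact separable_inr_mul_temporalDifference _ _ θ0 θ1 (hU01 ω) _ _ γ _ j
  have hindepH : IndepFun U (fun ω => H (Φ0 ω)) P :=
    hindep.symm.comp measurable_id (hH.comp measurable_fst)
  have hψ1_memLp : ∀ k, MemLp (fun ω => ψ1 (g (Φ0 ω)) k) 2 P :=
    memLp_two_apply_of_integrable_sq_norm
      (hψ1.comp (hg.comp hΦ0)).aestronglyMeasurable hint10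
  have hcbull_memLp : MemLp (fun ω => cbull (Φ0 ω)) 2 P :=
    (memLp_two_iff_integrable_sq (hcbull.comp hΦ0).aestronglyMeasurable).2 hc2'
  rw [hfbar, integral_congr_ae (ae_of_all _ hintegrand),
    hindepH.integral_fun_mul_eq_mul_integral hU.aestronglyMeasurable
      (hH.comp hΦ0).aestronglyMeasurable,
    integral_eq_measureReal_of_forall_eq_zero_or_eq_one hU hU01,
    integral_mul_neg_sum_mul_add hψ1_memLp hcbull_memLp θ1 j, hp1]
  simp only [hR1, measureReal_def]

/-- For a separable feature map, the last-`d₁`-coordinates block of the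
Q-learning mean-flow vector field is affine in `θ¹` and does not depend on `θ⁰` or `γ`:
it equals `p₁ (−R₍₁₎ θ¹ + E[ψ⁽¹⁾(S) c•(Φ₀)])`. -/
theorem stmt_1
    {Ω X 𝕊 : Type*} [MeasurableSpace Ω] [MeasurableSpace X] [MeasurableSpace 𝕊]
    (P : Measure Ω) [IsProbabilityMeasure P]
    {d₀ d₁ : ℕ}
    (Φ0 Φ1 : Ω → X) (g : X → 𝕊) (U : Ω → ℝ)
    (hΦ0 : Measurable Φ0) (hΦ1 : Measurable Φ1) (hg : Measurable g) (hU : Measurable U)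
    (hU01 : ∀ ω, U ω = 0 ∨ U ω = 1)
    (hindep : IndepFun (fun ω => (Φ0 ω, Φ1 ω)) U P)
    (ψ0 : 𝕊 → Fin d₀ → ℝ) (ψ1 : 𝕊 → Fin d₁ → ℝ)
    (hψ0 : Measurable ψ0) (hψ1 : Measurable ψ1)
    (hint00 : Integrable (fun ω => ‖ψ0 (g (Φ0 ω))‖ ^ 2) P)
    (hint10 : Integrable (fun ω => ‖ψ1 (g (Φ0 ω))‖ ^ 2) P)
    (hint01 : Integrable (fun ω => ‖ψ0 (g (Φ1 ω))‖ ^ 2) P)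
    (hint11 : Integrable (fun ω => ‖ψ1 (g (Φ1 ω))‖ ^ 2) P)
    (ccirc cbull : X → ℝ) (hccirc : Measurable ccirc) (hcbull : Measurable cbull)
    (hc2 : Integrable (fun ω => (ccirc (Φ0 ω)) ^ 2) P)
    (hc2' : Integrable (fun ω => (cbull (Φ0 ω)) ^ 2) P)
    (c : X → ℝ → ℝ)
    (hc : ∀ x u, c x u = (1 - u) * ccirc x + u * cbull x)
    (γ : ℝ) (hγ : 0 < γ) (hγ1 : γ ≤ 1)
    (ψ : 𝕊 → ℝ → (Fin d₀ ⊕ Fin d₁) → ℝ)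
    (hψ : ∀ s u, ψ s u = Sum.elim (fun i => (1 - u) * ψ0 s i) (fun j => u * ψ1 s j))
    (p1 : ℝ) (hp1 : p1 = (P {ω | U ω = 1}).toReal)
    (R1 : Matrix (Fin d₁) (Fin d₁) ℝ)
    (hR1 : ∀ i j, R1 i j = ∫ ω, ψ1 (g (Φ0 ω)) i * ψ1 (g (Φ0 ω)) j ∂P)
    (fbar : (Fin d₀ → ℝ) → (Fin d₁ → ℝ) → (Fin d₀ ⊕ Fin d₁) → ℝ)
    (hfbar : ∀ θ0 θ1 a, fbar θ0 θ1 a =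
      ∫ ω, ψ (g (Φ0 ω)) (U ω) a *
        (-(∑ b, Sum.elim θ0 θ1 b * ψ (g (Φ0 ω)) (U ω) b) + c (Φ0 ω) (U ω)
          + γ * (1 - U ω) *
            min (∑ i, θ0 i * ψ0 (g (Φ1 ω)) i) (∑ j, θ1 j * ψ1 (g (Φ1 ω)) j)) ∂P) :
    ∀ (θ0 : Fin d₀ → ℝ) (θ1 : Fin d₁ → ℝ) (j : Fin d₁),
      fbar θ0 θ1 (Sum.inr j) =
        p1 * (-(∑ k, R1 j k * θ1 k) + ∫ ω, ψ1 (g (Φ0 ω)) j * cbull (Φ0 ω) ∂P) :=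
  stmt_1_general P Φ0 Φ1 g U hΦ0 hg hU hU01 hindep ψ0 ψ1 hψ1 hint10 ccirc cbull hcbull hc2' c hc γ ψ
    hψ p1 hp1 R1 hR1 fbar hfbar
end

section
/- Let P be a Markov kernel on a measurable space Z with invariant probability measure π, and let ψ : Z → ℝ^d be measurable with all components in L²(π). Define Pg(x) := ∫ g(y) P(x, dy) for scalar g, define Pψ componentwise, and set R := ∫ ψψᵀ dπ and Σ := ∫ [ ∫ (ψ(y) − Pψ(x))(ψ(y) − Pψ(x))ᵀ P(x, dy) ] π(dx). Suppose there is ϱ ∈ [0, 1) with Σ ⪰ (1 − ϱ) R in the positive-semidefinite order. Then for every θ ∈ ℝ^d, the function g = θᵀψ satisfies ‖Pg‖²_{L²(π)} ≤ ϱ ‖g‖²_{L²(π)}; i.e., P acts as a strict L²(π)-contraction on the finite-dimensional subspace H = {θᵀψ : θ ∈ ℝ^d}. -/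
/-!
For `g = θᵀψ` the quadratic forms of `R` and `Σ` at `θ` are `‖g‖²` and the `π`-average of the
conditional variance `Var_{P(x)} g = P(g²)(x) - (Pg(x))²`. Invariance of `π` turns `∫ P(g²) dπ`
into `‖g‖²`, so `θᵀΣθ = ‖g‖² - ‖Pg‖²`, and `θᵀΣθ ≥ (1 - ϱ) θᵀRθ` is exactly `‖Pg‖² ≤ ϱ ‖g‖²`.
-/

open MeasureTheory ProbabilityTheory Matrix

lemma Matrix.dotProduct_mulVec_self_eq_sum {ι R : Type*} [Fintype ι] [CommSemiring R]
    (M : Matrix ι ι R) (θ : ι → R) :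
    θ ⬝ᵥ M *ᵥ θ = ∑ i, ∑ j, θ i * θ j * M i j := by
  simp only [dotProduct, mulVec, Finset.mul_sum]
  exact Finset.sum_congr rfl fun i _ ↦ Finset.sum_congr rfl fun j _ ↦ by ring

lemma Matrix.dotProduct_mulVec_self_eq_integral {ι α : Type*} [Fintype ι] {mα : MeasurableSpace α}
    {μ : Measure α} {M : Matrix ι ι ℝ} {F : ι → ι → α → ℝ}
    (hM : ∀ i j, M i j = ∫ x, F i j x ∂μ) (hF : ∀ i j, Integrable (F i j) μ) (θ : ι → ℝ) :
    θ ⬝ᵥ M *ᵥ θ = ∫ x, ∑ i, ∑ j, θ i * θ j * F i j x ∂μ := by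
  rw [dotProduct_mulVec_self_eq_sum,
    integral_finsetSum _ fun i _ ↦ integrable_finsetSum _ fun j _ ↦ (hF i j).const_mul _]
  refine Finset.sum_congr rfl fun i _ ↦ ?_
  rw [integral_finsetSum _ fun j _ ↦ (hF i j).const_mul _]
  exact Finset.sum_congr rfl fun j _ ↦ by rw [integral_const_mul, hM]

lemma sq_sum_mul_eq_sum_sum {ι R : Type*} [Fintype ι] [CommSemiring R] (a v : ι → R) :
    (∑ i, a i * v i) ^ 2 = ∑ i, ∑ j, a i * a j * (v i * v j) := by
  rw [sq, Finset.sum_mul_sum]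
  exact Finset.sum_congr rfl fun i _ ↦ Finset.sum_congr rfl fun j _ ↦ by ring

lemma covariance_fun_sum_mul_fun_sum_mul {Ω ι ι' : Type*} [Fintype ι] [Fintype ι']
    {mΩ : MeasurableSpace Ω} {ν : Measure Ω} [IsFiniteMeasure ν]
    {X : ι → Ω → ℝ} {Y : ι' → Ω → ℝ} (hX : ∀ i, MemLp (X i) 2 ν) (hY : ∀ j, MemLp (Y j) 2 ν)
    (a : ι → ℝ) (b : ι' → ℝ) :
    cov[fun ω ↦ ∑ i, a i * X i ω, fun ω ↦ ∑ j, b j * Y j ω; ν] =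
      ∑ i, ∑ j, a i * b j * cov[X i, Y j; ν] := by
  rw [covariance_fun_sum_fun_sum (X := fun i ω ↦ a i * X i ω) (Y := fun j ω ↦ b j * Y j ω)
    (fun i ↦ (hX i).const_mul _) (fun j ↦ (hY j).const_mul _)]
  simp only [covariance_const_mul_left, covariance_const_mul_right]
  exact Finset.sum_congr rfl fun i _ ↦ Finset.sum_congr rfl fun j _ ↦ by ring

lemma sq_integral_le_integral_sq {Ω : Type*} {mΩ : MeasurableSpace Ω} {ν : Measure Ω}
    [IsProbabilityMeasure ν] {f : Ω → ℝ} (hf : MemLp f 2 ν) :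
    (∫ ω, f ω ∂ν) ^ 2 ≤ ∫ ω, f ω ^ 2 ∂ν := by
  have h := variance_nonneg f ν
  rw [variance_eq_sub hf] at h
  simpa using h

namespace ProbabilityTheory.Kernel

variable {α : Type*} {mα : MeasurableSpace α} {κ : Kernel α α} {μ : Measure α}

lemma invariant_of_lintegral_eq (h : ∀ A, MeasurableSet A → ∫⁻ x, κ x A ∂μ = μ A) :
    κ.Invariant μ := by
  ext A hA
  rw [Measure.bind_apply hA κ.aemeasurable]
  exact h A hA

variable {E : Type*} [NormedAddCommGroup E] {f : α → E}

lemma Invariant.ae_integrable (hκ : κ.Invariant μ) (hf : Integrable f μ) :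
    ∀ᵐ x ∂μ, Integrable f (κ x) :=
  Measure.ae_integrable_of_integrable_comp (by rwa [hκ.def])

lemma Invariant.integrable_integral [NormedSpace ℝ E] [SFinite μ] [IsSFiniteKernel κ]
    (hκ : κ.Invariant μ) (hf : Integrable f μ) :
    Integrable (fun x ↦ ∫ y, f y ∂κ x) μ := by
  have hf' : Integrable f (κ ∘ₘ μ) := by rwa [hκ.def]
  rw [Measure.comp_eq_comp_const_apply] at hf'
  simpa using hf'.integral_comp

lemma Invariant.integral_integral [NormedSpace ℝ E] [SFinite μ] [IsSFiniteKernel κ]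
    (hκ : κ.Invariant μ) (hf : Integrable f μ) :
    ∫ x, ∫ y, f y ∂κ x ∂μ = ∫ x, f x ∂μ := by
  have hf' : Integrable f (κ ∘ₘ μ) := by rwa [hκ.def]
  rw [Measure.comp_eq_comp_const_apply] at hf'
  conv_rhs => rw [← hκ.def, Measure.comp_eq_comp_const_apply, Kernel.integral_comp hf']
  simp

variable {f g : α → ℝ}

lemma Invariant.ae_memLp_two (hκ : κ.Invariant μ) (hfm : Measurable f) (hf : MemLp f 2 μ) :
    ∀ᵐ x ∂μ, MemLp f 2 (κ x) := by
  filter_upwards [hκ.ae_integrable ((memLp_two_iff_integrable_sq hf.1).1 hf)] with x hx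
  exact (memLp_two_iff_integrable_sq hfm.aestronglyMeasurable).2 hx

lemma Invariant.memLp_two_integral [SFinite μ] [IsMarkovKernel κ] (hκ : κ.Invariant μ)
    (hfm : Measurable f) (hf : MemLp f 2 μ) :
    MemLp (fun x ↦ ∫ y, f y ∂κ x) 2 μ := by
  have hm : StronglyMeasurable fun x ↦ ∫ y, f y ∂κ x := hfm.stronglyMeasurable.integral_kernel
  refine (memLp_two_iff_integrable_sq hm.aestronglyMeasurable).2 <|
    (hκ.integrable_integral ((memLp_two_iff_integrable_sq hf.1).1 hf)).mono'
      (hm.measurable.pow_const 2).aestronglyMeasurable ?_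
  filter_upwards [hκ.ae_memLp_two hfm hf] with x hx
  rw [Real.norm_of_nonneg (sq_nonneg _)]
  exact sq_integral_le_integral_sq hx

lemma Invariant.ae_covariance_eq [IsMarkovKernel κ] (hκ : κ.Invariant μ)
    (hfm : Measurable f) (hf : MemLp f 2 μ) (hgm : Measurable g) (hg : MemLp g 2 μ) :
    (fun x ↦ cov[f, g; κ x]) =ᵐ[μ]
      fun x ↦ ∫ y, f y * g y ∂κ x - (∫ y, f y ∂κ x) * ∫ y, g y ∂κ x := by
  filter_upwards [hκ.ae_memLp_two hfm hf, hκ.ae_memLp_two hgm hg] with x hfx hgx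
  exact covariance_eq_sub hfx hgx

lemma Invariant.integrable_covariance [SFinite μ] [IsMarkovKernel κ] (hκ : κ.Invariant μ)
    (hfm : Measurable f) (hf : MemLp f 2 μ) (hgm : Measurable g) (hg : MemLp g 2 μ) :
    Integrable (fun x ↦ cov[f, g; κ x]) μ :=
  ((hκ.integrable_integral (hf.integrable_mul hg)).sub
    ((hκ.memLp_two_integral hfm hf).integrable_mul (hκ.memLp_two_integral hgm hg))).congr
    (hκ.ae_covariance_eq hfm hf hgm hg).symm

lemma Invariant.integral_covariance [SFinite μ] [IsMarkovKernel κ] (hκ : κ.Invariant μ)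
    (hfm : Measurable f) (hf : MemLp f 2 μ) (hgm : Measurable g) (hg : MemLp g 2 μ) :
    ∫ x, cov[f, g; κ x] ∂μ =
      ∫ x, f x * g x ∂μ - ∫ x, (∫ y, f y ∂κ x) * ∫ y, g y ∂κ x ∂μ := by
  have hfg : Integrable (fun x ↦ f x * g x) μ := hf.integrable_mul hg
  have hPfPg : Integrable (fun x ↦ (∫ y, f y ∂κ x) * ∫ y, g y ∂κ x) μ :=
    (hκ.memLp_two_integral hfm hf).integrable_mul (hκ.memLp_two_integral hgm hg)
  rw [integral_congr_ae (hκ.ae_covariance_eq hfm hf hgm hg),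
    integral_sub (hκ.integrable_integral hfg) hPfPg, hκ.integral_integral hfg]

end ProbabilityTheory.Kernel

theorem stmt_9_general
    {Z : Type*} [MeasurableSpace Z]
    (P : Kernel Z Z) [IsMarkovKernel P]
    (π : Measure Z) [IsProbabilityMeasure π]
    (hinv : ∀ A : Set Z, MeasurableSet A → ∫⁻ x, P x A ∂π = π A)
    {d : ℕ}
    (ψ : Z → Fin d → ℝ) (hψ : Measurable ψ)
    (hL2 : ∀ i, Integrable (fun x => (ψ x i) ^ 2) π)
    (Pψ : Z → Fin d → ℝ)
    (hPψ : ∀ x i, Pψ x i = ∫ y, ψ y i ∂(P x))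
    (R Sig : Matrix (Fin d) (Fin d) ℝ)
    (hR : ∀ i j, R i j = ∫ x, ψ x i * ψ x j ∂π)
    (hSig : ∀ i j,
      Sig i j = ∫ x, (∫ y, (ψ y i - Pψ x i) * (ψ y j - Pψ x j) ∂(P x)) ∂π)
    (ϱ : ℝ)
    (hPSD : (Sig - (1 - ϱ) • R).PosSemidef) :
    ∀ θ : Fin d → ℝ,
      ∫ x, (∫ y, (∑ i, θ i * ψ y i) ∂(P x)) ^ 2 ∂π ≤
        ϱ * ∫ x, (∑ i, θ i * ψ x i) ^ 2 ∂π := by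
  intro θ
  have hP : P.Invariant π := Kernel.invariant_of_lintegral_eq hinv
  have hψm (i : Fin d) : Measurable fun x ↦ ψ x i := (measurable_pi_apply i).comp hψ
  have hψL2 (i : Fin d) : MemLp (fun x ↦ ψ x i) 2 π :=
    (memLp_two_iff_integrable_sq (hψm i).aestronglyMeasurable).2 (hL2 i)
  set g : Z → ℝ := fun x ↦ ∑ i, θ i * ψ x i
  have hgm : Measurable g := Finset.measurable_sum _ fun i _ ↦ (hψm i).const_mul (θ i)
  have hgL2 : MemLp g 2 π := memLp_finsetSum _ fun i _ ↦ (hψL2 i).const_mul (θ i)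
  have hRθ : θ ⬝ᵥ R *ᵥ θ = ∫ x, g x ^ 2 ∂π := by
    simp only [dotProduct_mulVec_self_eq_integral hR fun i j ↦ (hψL2 i).integrable_mul (hψL2 j),
      g, sq_sum_mul_eq_sum_sum]
  have hSigθ : θ ⬝ᵥ Sig *ᵥ θ = ∫ x, g x * g x ∂π - ∫ x, (∫ y, g y ∂P x) * ∫ y, g y ∂P x ∂π := by
    have hSig_cov (i j : Fin d) : Sig i j = ∫ x, cov[fun y ↦ ψ y i, fun y ↦ ψ y j; P x] ∂π := by
      simp only [hSig, hPψ]
      rfl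
    rw [dotProduct_mulVec_self_eq_integral hSig_cov
      fun i j ↦ hP.integrable_covariance (hψm i) (hψL2 i) (hψm j) (hψL2 j),
      ← hP.integral_covariance hgm hgL2 hgm hgL2]
    refine integral_congr_ae ?_
    filter_upwards [ae_all_iff.2 fun i ↦ hP.ae_memLp_two (hψm i) (hψL2 i)] with x hx
    exact (covariance_fun_sum_mul_fun_sum_mul hx hx θ θ).symm
  have hPSDθ := hPSD.dotProduct_mulVec_nonneg θ
  rw [star_trivial, sub_mulVec, dotProduct_sub, smul_mulVec, dotProduct_smul, hRθ, hSigθ,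
    smul_eq_mul] at hPSDθ
  simp only [← sq] at hPSDθ
  show ∫ x, (∫ y, g y ∂P x) ^ 2 ∂π ≤ ϱ * ∫ x, g x ^ 2 ∂π
  linarith

/-- If the steady-state conditional covariance `Σ` of the features
dominates `(1−ϱ)R` in the positive-semidefinite order, then the Markov kernel `P`
is a strict `L²(π)`-contraction (with constant `ϱ`) on the span of the features. -/
theorem stmt_9
    {Z : Type*} [MeasurableSpace Z]
    (P : Kernel Z Z) [IsMarkovKernel P]
    (π : Measure Z) [IsProbabilityMeasure π]
    (hinv : ∀ A : Set Z, MeasurableSet A → ∫⁻ x, P x A ∂π = π A)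
    {d : ℕ}
    (ψ : Z → Fin d → ℝ) (hψ : Measurable ψ)
    (hL2 : ∀ i, Integrable (fun x => (ψ x i) ^ 2) π)
    (Pψ : Z → Fin d → ℝ)
    (hPψ : ∀ x i, Pψ x i = ∫ y, ψ y i ∂(P x))
    (R Sig : Matrix (Fin d) (Fin d) ℝ)
    (hR : ∀ i j, R i j = ∫ x, ψ x i * ψ x j ∂π)
    (hSig : ∀ i j,
      Sig i j = ∫ x, (∫ y, (ψ y i - Pψ x i) * (ψ y j - Pψ x j) ∂(P x)) ∂π)
    (ϱ : ℝ) (hϱ0 : 0 ≤ ϱ) (hϱ1 : ϱ < 1)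
    (hPSD : (Sig - (1 - ϱ) • R).PosSemidef) :
    ∀ θ : Fin d → ℝ,
      ∫ x, (∫ y, (∑ i, θ i * ψ y i) ∂(P x)) ^ 2 ∂π ≤
        ϱ * ∫ x, (∑ i, θ i * ψ x i) ^ 2 ∂π :=
  stmt_9_general P π hinv ψ hψ hL2 Pψ hPψ R Sig hR hSig ϱ hPSD
end

section
/- Let P be a Markov kernel on a measurable space Z with invariant probability measure π, let Δ ⊆ Z be measurable, and let ψ : Z → ℝ^d be measurable with all components in L²(π). Define Pg(x) := ∫ g(y) P(x, dy) for scalar g and Pψ componentwise; set R := ∫ ψψᵀ dπ, Σ := ∫ [∫ (ψ(y) − Pψ(x))(ψ(y) − Pψ(x))ᵀ P(x, dy)] π(dx), and M^Δ := ∫_{Δᶜ} (Pψ)(Pψ)ᵀ dπ. If there is ϱ ∈ [0,1) with Σ + M^Δ ⪰ (1 − ϱ) R, then for every θ ∈ ℝ^d the function g = θᵀψ satisfies ∫ (1_Δ · Pg)² dπ ≤ ϱ ∫ g² dπ; i.e., the killed kernel P_Δ(x, A) = 1_Δ(x)P(x, A) is a strict L²(π)-contraction on the subspace H = {θᵀψ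 : θ ∈ ℝ^d}. -/
/-!
Write `g = θᵀψ` and `h = Pg = θᵀ(Pψ)`. The quadratic forms of `R`, `Σ` and `M^Δ` at `θ` are
`∫ g²`, `∫ g² - ∫ h²` and `∫_{Δᶜ} h²`: for `Σ`, integrate the conditional covariance identity
`Cov_{P x}(ψᵢ, ψⱼ) = P(ψᵢψⱼ)(x) - Pψᵢ(x) Pψⱼ(x)` against `π` and use invariance,
`∫ Pf dπ = ∫ f dπ`. Nonnegativity of the form of `Σ + M^Δ - (1 - ϱ)R` at `θ` then reads
`∫_Δ h² ≤ ϱ ∫ g²`.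
-/

open MeasureTheory ProbabilityTheory Matrix

section QuadraticForm

variable {α ι : Type*} [MeasurableSpace α] [Fintype ι] {μ : Measure α} {f : α → ι → ℝ}

lemma integral_dotProduct (hf : ∀ i, Integrable (fun x => f x i) μ) (θ : ι → ℝ) :
    ∫ x, θ ⬝ᵥ f x ∂μ = θ ⬝ᵥ fun i => ∫ x, f x i ∂μ := by
  simp only [dotProduct]
  rw [integral_finsetSum _ fun i _ => (hf i).const_mul (θ i)]
  simp only [integral_const_mul]

lemma dotProduct_mulVec_eq_integral_sq {A : Matrix ι ι ℝ}
    (hA : ∀ i j, A i j = ∫ x, f x i * f x j ∂μ) (hf : ∀ i, MemLp (fun x => f x i) 2 μ)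
    (θ : ι → ℝ) : θ ⬝ᵥ A *ᵥ θ = ∫ x, (θ ⬝ᵥ f x) ^ 2 ∂μ := by
  have hprod : ∀ i j, Integrable (fun x => θ i * θ j * (f x i * f x j)) μ := fun i j =>
    ((hf i).integrable_mul (hf j)).const_mul _
  have hsq : ∀ x, (θ ⬝ᵥ f x) ^ 2 = ∑ i, ∑ j, θ i * θ j * (f x i * f x j) := fun x => by
    simp only [dotProduct, sq, Finset.sum_mul_sum]
    exact Finset.sum_congr rfl fun i _ => Finset.sum_congr rfl fun j _ => by ring
  simp_rw [hsq, integral_finsetSum _ fun i _ => integrable_finsetSum _ fun j _ => hprod i j,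
    integral_finsetSum _ fun j _ => hprod _ j, integral_const_mul, ← hA, dotProduct, mulVec,
    dotProduct, Finset.mul_sum]
  exact Finset.sum_congr rfl fun i _ => Finset.sum_congr rfl fun j _ => by ring

end QuadraticForm

namespace ProbabilityTheory.Kernel.Invariant

variable {Z : Type*} [MeasurableSpace Z] {P : Kernel Z Z} {π : Measure Z}

section Integrable

variable {E : Type*} [NormedAddCommGroup E] {f : Z → E}

lemma ae_integrable_s11 (hP : P.Invariant π) (hf : Integrable f π) :
    ∀ᵐ x ∂π, Integrable f (P x) := by
  rw [← hP.def] at hf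
  exact Measure.ae_integrable_of_integrable_comp hf

variable [NormedSpace ℝ E]

lemma integrable_integral_s11 (hP : P.Invariant π) (hf : Integrable f π) :
    Integrable (fun x => ∫ y, f y ∂P x) π := by
  rw [← hP.def, Measure.comp_eq_comp_const_apply] at hf
  simpa using hf.integral_comp

lemma integral_integral_s11 (hP : P.Invariant π) (hf : Integrable f π) :
    ∫ x, ∫ y, f y ∂P x ∂π = ∫ x, f x ∂π := by
  rw [← hP.def, Measure.comp_eq_comp_const_apply] at hf
  conv_rhs => rw [← hP.def, Measure.comp_eq_comp_const_apply]
  simpa using (integral_comp hf).symm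

end Integrable

variable [IsFiniteMeasure π] {f g : Z → ℝ}

lemma ae_memLp_two_s11 (hP : P.Invariant π) (hf : MemLp f 2 π) :
    ∀ᵐ x ∂π, MemLp f 2 (P x) := by
  filter_upwards [hP.ae_integrable_s11 (hf.integrable one_le_two),
    hP.ae_integrable_s11 hf.integrable_sq] with x hf₁ hf₂
  exact (memLp_two_iff_integrable_sq hf₁.1).2 hf₂

variable [IsMarkovKernel P]

lemma memLp_two_integral_s11 (hP : P.Invariant π) (hf : MemLp f 2 π) :
    MemLp (fun x => ∫ y, f y ∂P x) 2 π := by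
  have hPf := hP.integrable_integral_s11 (hf.integrable one_le_two)
  refine (memLp_two_iff_integrable_sq hPf.1).2 <|
    (hP.integrable_integral_s11 hf.integrable_sq).mono' (hPf.1.pow 2) ?_
  filter_upwards [hP.ae_memLp_two_s11 hf] with x hfx
  have hvar := variance_nonneg f (P x)
  rw [variance_eq_sub hfx] at hvar
  rw [Real.norm_eq_abs, abs_of_nonneg (sq_nonneg _)]
  simpa [sub_nonneg] using hvar

lemma integral_covariance_s11 (hP : P.Invariant π) (hf : MemLp f 2 π) (hg : MemLp g 2 π) :
    ∫ x, cov[f, g; P x] ∂π =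
      ∫ x, f x * g x ∂π - ∫ x, (∫ y, f y ∂P x) * (∫ y, g y ∂P x) ∂π := by
  have hcov : ∀ᵐ x ∂π, cov[f, g; P x] =
      ∫ y, f y * g y ∂P x - (∫ y, f y ∂P x) * (∫ y, g y ∂P x) := by
    filter_upwards [hP.ae_memLp_two_s11 hf, hP.ae_memLp_two_s11 hg] with x hfx hgx
    exact covariance_eq_sub hfx hgx
  have hfg : Integrable (fun x => f x * g x) π := hf.integrable_mul hg
  have hPfPg : Integrable (fun x => (∫ y, f y ∂P x) * (∫ y, g y ∂P x)) π :=
    (hP.memLp_two_integral_s11 hf).integrable_mul (hP.memLp_two_integral_s11 hg)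
  rw [integral_congr_ae hcov, integral_sub (hP.integrable_integral_s11 hfg) hPfPg,
    hP.integral_integral_s11 hfg]

lemma dotProduct_mulVec_of_integral_covariance (hP : P.Invariant π) {ι : Type*} [Fintype ι]
    {ψ : Z → ι → ℝ} (hψ : ∀ i, MemLp (fun x => ψ x i) 2 π) {S : Matrix ι ι ℝ}
    (hS : ∀ i j, S i j = ∫ x, cov[fun y => ψ y i, fun y => ψ y j; P x] ∂π) (θ : ι → ℝ) :
    θ ⬝ᵥ S *ᵥ θ =
      ∫ x, (θ ⬝ᵥ ψ x) ^ 2 ∂π - ∫ x, (θ ⬝ᵥ fun i => ∫ y, ψ y i ∂P x) ^ 2 ∂π := by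
  let R : Matrix ι ι ℝ := .of fun i j => ∫ x, ψ x i * ψ x j ∂π
  let N : Matrix ι ι ℝ := .of fun i j => ∫ x, (∫ y, ψ y i ∂P x) * (∫ y, ψ y j ∂P x) ∂π
  have hSRN : S = R - N := Matrix.ext fun i j => by
    rw [hS, hP.integral_covariance_s11 (hψ i) (hψ j)]
    rfl
  rw [hSRN, sub_mulVec, dotProduct_sub,
    dotProduct_mulVec_eq_integral_sq (A := R) (fun i j => rfl) hψ,
    dotProduct_mulVec_eq_integral_sq (A := N) (fun i j => rfl)
      fun i => hP.memLp_two_integral_s11 (hψ i)]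

end ProbabilityTheory.Kernel.Invariant

theorem stmt_11_general
    {Z : Type*} [MeasurableSpace Z]
    (P : Kernel Z Z) [IsMarkovKernel P]
    (π : Measure Z) [IsProbabilityMeasure π]
    (hinv : ∀ A : Set Z, MeasurableSet A → ∫⁻ x, P x A ∂π = π A)
    (Δ : Set Z) (hΔ : MeasurableSet Δ)
    {d : ℕ}
    (ψ : Z → Fin d → ℝ) (hψ : Measurable ψ)
    (hL2 : ∀ i, Integrable (fun x => (ψ x i) ^ 2) π)
    (Pψ : Z → Fin d → ℝ)
    (hPψ : ∀ x i, Pψ x i = ∫ y, ψ y i ∂(P x))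
    (R Sig MΔ : Matrix (Fin d) (Fin d) ℝ)
    (hR : ∀ i j, R i j = ∫ x, ψ x i * ψ x j ∂π)
    (hSig : ∀ i j,
      Sig i j = ∫ x, (∫ y, (ψ y i - Pψ x i) * (ψ y j - Pψ x j) ∂(P x)) ∂π)
    (hMΔ : ∀ i j, MΔ i j = ∫ x in Δᶜ, Pψ x i * Pψ x j ∂π)
    (ϱ : ℝ)
    (hPSD : (Sig + MΔ - (1 - ϱ) • R).PosSemidef) :
    ∀ θ : Fin d → ℝ,
      ∫ x, (Δ.indicator (fun x' => ∫ y, (∑ i, θ i * ψ y i) ∂(P x')) x) ^ 2 ∂π ≤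
        ϱ * ∫ x, (∑ i, θ i * ψ x i) ^ 2 ∂π := by
  intro θ
  have hP : P.Invariant π := Measure.ext fun A hA => by
    rw [Measure.bind_apply hA P.aemeasurable, hinv A hA]
  obtain rfl : Pψ = fun x i => ∫ y, ψ y i ∂P x := funext fun x => funext (hPψ x)
  beta_reduce at hSig hMΔ
  have hψL2 : ∀ i, MemLp (fun x => ψ x i) 2 π := fun i =>
    (memLp_two_iff_integrable_sq (measurable_pi_iff.1 hψ i).aestronglyMeasurable).2 (hL2 i)
  have hPψL2 : ∀ i, MemLp (fun x => ∫ y, ψ y i ∂P x) 2 π := fun i =>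
    hP.memLp_two_integral_s11 (hψL2 i)
  set h : Z → ℝ := fun x => θ ⬝ᵥ fun i => ∫ y, ψ y i ∂P x
  have hPg : ∀ᵐ x ∂π, ∫ y, θ ⬝ᵥ ψ y ∂P x = h x := by
    filter_upwards [ae_all_iff.2 fun i => hP.ae_integrable_s11 ((hψL2 i).integrable one_le_two)]
      with x hx
    exact integral_dotProduct hx θ
  have hPSD_θ := hPSD.dotProduct_mulVec_nonneg θ
  rw [star_trivial, sub_mulVec, add_mulVec, smul_mulVec, dotProduct_sub, dotProduct_add,
    dotProduct_smul, smul_eq_mul, hP.dotProduct_mulVec_of_integral_covariance hψL2 hSig,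
    dotProduct_mulVec_eq_integral_sq hR hψL2,
    dotProduct_mulVec_eq_integral_sq hMΔ fun i => (hPψL2 i).restrict Δᶜ] at hPSD_θ
  have hh : Integrable (fun x => h x ^ 2) π :=
    (memLp_finsetSum _ fun i _ => (hPψL2 i).const_mul (θ i)).integrable_sq
  calc ∫ x, (Δ.indicator (fun x' => ∫ y, θ ⬝ᵥ ψ y ∂P x') x) ^ 2 ∂π
      = ∫ x in Δ, h x ^ 2 ∂π := by
        rw [← integral_indicator hΔ]
        refine integral_congr_ae ?_
        filter_upwards [hPg] with x hx
        by_cases hxΔ : x ∈ Δ <;> simp [hxΔ, hx]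
    _ ≤ ϱ * ∫ x, (θ ⬝ᵥ ψ x) ^ 2 ∂π := by linarith [integral_add_compl hΔ hh]

/-- If `Σ + M^Δ ⪰ (1−ϱ)R` in the positive-semidefinite order, then the
killed kernel `P_Δ(x,A) = 1_Δ(x)P(x,A)` is a strict `L²(π)`-contraction (constant `ϱ`)
on the span of the features `ψ`. -/
theorem stmt_11
    {Z : Type*} [MeasurableSpace Z]
    (P : Kernel Z Z) [IsMarkovKernel P]
    (π : Measure Z) [IsProbabilityMeasure π]
    (hinv : ∀ A : Set Z, MeasurableSet A → ∫⁻ x, P x A ∂π = π A)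
    (Δ : Set Z) (hΔ : MeasurableSet Δ)
    {d : ℕ}
    (ψ : Z → Fin d → ℝ) (hψ : Measurable ψ)
    (hL2 : ∀ i, Integrable (fun x => (ψ x i) ^ 2) π)
    (Pψ : Z → Fin d → ℝ)
    (hPψ : ∀ x i, Pψ x i = ∫ y, ψ y i ∂(P x))
    (R Sig MΔ : Matrix (Fin d) (Fin d) ℝ)
    (hR : ∀ i j, R i j = ∫ x, ψ x i * ψ x j ∂π)
    (hSig : ∀ i j,
      Sig i j = ∫ x, (∫ y, (ψ y i - Pψ x i) * (ψ y j - Pψ x j) ∂(P x)) ∂π)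
    (hMΔ : ∀ i j, MΔ i j = ∫ x in Δᶜ, Pψ x i * Pψ x j ∂π)
    (ϱ : ℝ) (hϱ0 : 0 ≤ ϱ) (hϱ1 : ϱ < 1)
    (hPSD : (Sig + MΔ - (1 - ϱ) • R).PosSemidef) :
    ∀ θ : Fin d → ℝ,
      ∫ x, (Δ.indicator (fun x' => ∫ y, (∑ i, θ i * ψ y i) ∂(P x')) x) ^ 2 ∂π ≤
        ϱ * ∫ x, (∑ i, θ i * ψ x i) ^ 2 ∂π :=
  stmt_11_general P π hinv Δ hΔ ψ hψ hL2 Pψ hPψ R Sig MΔ hR hSig hMΔ ϱ hPSD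
end

section
/- Let 𝕊 and X be measurable spaces, g : X → 𝕊, ψ⁰, ψ¹ : 𝕊 → ℝ^d, and c : X × {0,1} → ℝ measurable, and fix γ ∈ (0,1]. Write ψ(s,u) = u ψ¹(s) + (1−u) ψ⁰(s), and for z = (u, x, x⁺) ∈ {0,1} × X × X, with s = g(x) and s⁺ = g(x⁺), define f(θ, z) := ψ(s,u) [ −θᵀψ(s,u) + c(x,u) + γ(1−u) min{ θᵀψ⁰(s⁺), θᵀψ¹(s⁺) } ] for θ ∈ ℝ^d. Then there exists a constant K ≥ 1 such that, with ℓ_ψ(x) := ‖ψ¹(g(x))‖ + ‖ψ⁰(g(x))‖ and L(z) := K ℓ_ψ(x)² + c(x,u)² + ℓ_ψ(x⁺)², the following hold for every z and every θ, θ' ∈ ℝ^d: ‖f(0, z)‖ ≤ L(z) and ‖f(θ, z) − f(θ', z)‖ ≤ L(z) ‖θ − θ'‖. -/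
/-!
The update is `f(θ, z) = a(θ) • ψ(s,u)` with a scalar temporal difference `a(θ)` that is
Lipschitz in `θ`: the linear term contributes `‖ψ(s,u)‖ ≤ ℓ_ψ(x)`, and the discounted minimum
of two linear functionals contributes `γ(1-u) max(‖ψ⁰(s⁺)‖, ‖ψ¹(s⁺)‖) ≤ ℓ_ψ(x⁺)`. Hence
`f(·, z)` is Lipschitz with constant `(ℓ_ψ(x) + ℓ_ψ(x⁺)) ℓ_ψ(x)`, and `‖f(0, z)‖ ≤ |c(x,u)| ℓ_ψ(x)`;
both are absorbed into `L(z)` with `K = 2` by `ab ≤ a² + b²`.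
-/

open RealInnerProductSpace

section QUpdate

variable {E : Type*} [NormedAddCommGroup E] [InnerProductSpace ℝ E]

/-- The paper's `f(θ, z)` with `w = ψ(s,u)`, `cc = c(x,u)`, `β = γ(1-u)` and `wᵢ = ψⁱ(s⁺)`. -/
noncomputable def qUpdate (β cc : ℝ) (w w₀ w₁ θ : E) : E :=
  (-⟪θ, w⟫ + cc + β * min ⟪θ, w₀⟫ ⟪θ, w₁⟫) • w

theorem qUpdate_zero (β cc : ℝ) (w w₀ w₁ : E) : qUpdate β cc w w₀ w₁ 0 = cc • w := by
  simp [qUpdate]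

theorem abs_inner_sub_inner_le (θ θ' w : E) : |⟪θ, w⟫ - ⟪θ', w⟫| ≤ ‖θ - θ'‖ * ‖w‖ := by
  rw [← inner_sub_left]
  exact abs_real_inner_le_norm _ _

theorem abs_min_inner_sub_min_inner_le (θ θ' w₀ w₁ : E) :
    |min ⟪θ, w₀⟫ ⟪θ, w₁⟫ - min ⟪θ', w₀⟫ ⟪θ', w₁⟫| ≤ ‖θ - θ'‖ * max ‖w₀‖ ‖w₁‖ := by
  refine (abs_min_sub_min_le_max _ _ _ _).trans ?_
  rw [mul_max_of_nonneg _ _ (norm_nonneg _)]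
  exact max_le_max (abs_inner_sub_inner_le _ _ _) (abs_inner_sub_inner_le _ _ _)

theorem norm_qUpdate_sub_le {β : ℝ} (hβ : 0 ≤ β) (cc : ℝ) (w w₀ w₁ θ θ' : E) :
    ‖qUpdate β cc w w₀ w₁ θ - qUpdate β cc w w₀ w₁ θ'‖
      ≤ (‖w‖ + β * max ‖w₀‖ ‖w₁‖) * ‖w‖ * ‖θ - θ'‖ := by
  have hdiff : |(-⟪θ, w⟫ + cc + β * min ⟪θ, w₀⟫ ⟪θ, w₁⟫)
      - (-⟪θ', w⟫ + cc + β * min ⟪θ', w₀⟫ ⟪θ', w₁⟫)|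
      ≤ (‖w‖ + β * max ‖w₀‖ ‖w₁‖) * ‖θ - θ'‖ :=
    calc _ = |-(⟪θ, w⟫ - ⟪θ', w⟫) + β * (min ⟪θ, w₀⟫ ⟪θ, w₁⟫ - min ⟪θ', w₀⟫ ⟪θ', w₁⟫)| := by
          ring_nf
      _ ≤ |⟪θ, w⟫ - ⟪θ', w⟫| + β * |min ⟪θ, w₀⟫ ⟪θ, w₁⟫ - min ⟪θ', w₀⟫ ⟪θ', w₁⟫| := by
          refine (abs_add_le _ _).trans_eq ?_
          rw [abs_neg, abs_mul, abs_of_nonneg hβ]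
      _ ≤ ‖θ - θ'‖ * ‖w‖ + β * (‖θ - θ'‖ * max ‖w₀‖ ‖w₁‖) := by
          gcongr
          exacts [abs_inner_sub_inner_le _ _ _, abs_min_inner_sub_min_inner_le _ _ _ _]
      _ = _ := by ring
  rw [qUpdate, qUpdate, ← sub_smul, norm_smul, Real.norm_eq_abs]
  calc _ ≤ (‖w‖ + β * max ‖w₀‖ ‖w₁‖) * ‖θ - θ'‖ * ‖w‖ := by gcongr
    _ = _ := by ring

end QUpdate

theorem norm_smul_add_one_sub_smul_le {E : Type*} [SeminormedAddCommGroup E] [NormedSpace ℝ E]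
    {u : ℝ} (hu : u ∈ Set.Icc (0 : ℝ) 1) (v₁ v₀ : E) :
    ‖u • v₁ + (1 - u) • v₀‖ ≤ ‖v₁‖ + ‖v₀‖ := by
  obtain ⟨hu0, hu1⟩ := hu
  calc _ ≤ u * ‖v₁‖ + (1 - u) * ‖v₀‖ := by
        refine (norm_add_le _ _).trans_eq ?_
        rw [norm_smul, norm_smul, Real.norm_of_nonneg hu0, Real.norm_of_nonneg (sub_nonneg.2 hu1)]
    _ ≤ ‖v₁‖ + ‖v₀‖ := by nlinarith [norm_nonneg v₁, norm_nonneg v₀]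

theorem stmt_12_general
    {𝕊 X : Type*} {d : ℕ}
    (g : X → 𝕊)
    (ψ0 ψ1 : 𝕊 → EuclideanSpace ℝ (Fin d))
    (c : X → ℝ → ℝ)
    (γ : ℝ) (hγ : 0 < γ) (hγ1 : γ ≤ 1)
    (ψ : 𝕊 → ℝ → EuclideanSpace ℝ (Fin d))
    (hψ : ∀ s u, ψ s u = u • ψ1 s + (1 - u) • ψ0 s)
    (f : EuclideanSpace ℝ (Fin d) → ℝ → X → X → EuclideanSpace ℝ (Fin d))
    (hf : ∀ θ u x xp, f θ u x xp =
      (-(inner ℝ θ (ψ (g x) u) : ℝ) + c x u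
        + γ * (1 - u) * min ((inner ℝ θ (ψ0 (g xp)) : ℝ)) ((inner ℝ θ (ψ1 (g xp)) : ℝ)))
        • ψ (g x) u) :
    ∃ K : ℝ, 1 ≤ K ∧
      ∀ u ∈ ({0, 1} : Set ℝ), ∀ (x xp : X) (θ θ' : EuclideanSpace ℝ (Fin d)),
        ‖f 0 u x xp‖ ≤
          K * (‖ψ1 (g x)‖ + ‖ψ0 (g x)‖) ^ 2 + (c x u) ^ 2
            + (‖ψ1 (g xp)‖ + ‖ψ0 (g xp)‖) ^ 2 ∧
        ‖f θ u x xp - f θ' u x xp‖ ≤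
          (K * (‖ψ1 (g x)‖ + ‖ψ0 (g x)‖) ^ 2 + (c x u) ^ 2
            + (‖ψ1 (g xp)‖ + ‖ψ0 (g xp)‖) ^ 2) * ‖θ - θ'‖ := by
  refine ⟨2, one_le_two, fun u hu x xp θ θ' => ?_⟩
  set ℓx := ‖ψ1 (g x)‖ + ‖ψ0 (g x)‖
  set ℓp := ‖ψ1 (g xp)‖ + ‖ψ0 (g xp)‖
  have hu01 : u ∈ Set.Icc (0 : ℝ) 1 := by
    rcases hu with rfl | rfl <;> norm_num
  have hfq : ∀ θ, f θ u x xp =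
      qUpdate (γ * (1 - u)) (c x u) (ψ (g x) u) (ψ0 (g xp)) (ψ1 (g xp)) θ :=
    fun θ => hf θ u x xp
  have hβ0 : 0 ≤ γ * (1 - u) := mul_nonneg hγ.le (sub_nonneg.2 hu01.2)
  have hβ1 : γ * (1 - u) ≤ 1 := mul_le_one₀ hγ1 (sub_nonneg.2 hu01.2) (by linarith [hu01.1])
  have hw : ‖ψ (g x) u‖ ≤ ℓx := by
    rw [hψ]; exact norm_smul_add_one_sub_smul_le hu01 _ _
  have hw' : max ‖ψ0 (g xp)‖ ‖ψ1 (g xp)‖ ≤ ℓp :=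
    max_le (le_add_of_nonneg_left (norm_nonneg _)) (le_add_of_nonneg_right (norm_nonneg _))
  constructor
  · rw [hfq, qUpdate_zero, norm_smul, Real.norm_eq_abs]
    nlinarith [mul_le_mul_of_nonneg_left hw (abs_nonneg (c x u)), sq_abs (c x u),
      sq_nonneg (|c x u| - ℓx), sq_nonneg ℓp]
  · have hlip : ‖ψ (g x) u‖ + γ * (1 - u) * max ‖ψ0 (g xp)‖ ‖ψ1 (g xp)‖ ≤ ℓx + ℓp :=
      add_le_add hw <|
        (mul_le_of_le_one_left ((norm_nonneg _).trans (le_max_left _ _)) hβ1).trans hw'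
    rw [hfq, hfq]
    refine (norm_qUpdate_sub_le hβ0 _ _ _ _ _ _).trans
      (mul_le_mul_of_nonneg_right ?_ (norm_nonneg _))
    nlinarith [mul_le_mul hlip hw (norm_nonneg _) (by positivity), sq_nonneg (ℓx - ℓp),
      sq_nonneg (c x u)]

/-- Lemma `QLip`: the Q-learning update direction `f(θ, z)` for
partially observed optimal stopping satisfies the Lipschitz bound (SA2) with
coefficient `L(z) = K ℓ_ψ(x)² + c(x,u)² + ℓ_ψ(x⁺)²`. -/
theorem stmt_12
    {𝕊 X : Type*} [MeasurableSpace 𝕊] [MeasurableSpace X] {d : ℕ}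
    (g : X → 𝕊) (hg : Measurable g)
    (ψ0 ψ1 : 𝕊 → EuclideanSpace ℝ (Fin d))
    (hψ0 : Measurable ψ0) (hψ1 : Measurable ψ1)
    (c : X → ℝ → ℝ) (hc : Measurable fun p : X × ℝ => c p.1 p.2)
    (γ : ℝ) (hγ : 0 < γ) (hγ1 : γ ≤ 1)
    (ψ : 𝕊 → ℝ → EuclideanSpace ℝ (Fin d))
    (hψ : ∀ s u, ψ s u = u • ψ1 s + (1 - u) • ψ0 s)
    (f : EuclideanSpace ℝ (Fin d) → ℝ → X → X → EuclideanSpace ℝ (Fin d))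
    (hf : ∀ θ u x xp, f θ u x xp =
      (-(inner ℝ θ (ψ (g x) u) : ℝ) + c x u
        + γ * (1 - u) * min ((inner ℝ θ (ψ0 (g xp)) : ℝ)) ((inner ℝ θ (ψ1 (g xp)) : ℝ)))
        • ψ (g x) u) :
    ∃ K : ℝ, 1 ≤ K ∧
      ∀ u ∈ ({0, 1} : Set ℝ), ∀ (x xp : X) (θ θ' : EuclideanSpace ℝ (Fin d)),
        ‖f 0 u x xp‖ ≤
          K * (‖ψ1 (g x)‖ + ‖ψ0 (g x)‖) ^ 2 + (c x u) ^ 2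
            + (‖ψ1 (g xp)‖ + ‖ψ0 (g xp)‖) ^ 2 ∧
        ‖f θ u x xp - f θ' u x xp‖ ≤
          (K * (‖ψ1 (g x)‖ + ‖ψ0 (g x)‖) ^ 2 + (c x u) ^ 2
            + (‖ψ1 (g xp)‖ + ‖ψ0 (g xp)‖) ^ 2) * ‖θ - θ'‖ :=
  stmt_12_general g ψ0 ψ1 c γ hγ hγ1 ψ hψ f hf
end

section
/- Let P be a Markov kernel on a measurable space X, let V : X → [0,∞) and W : X → [1,∞) be measurable, and let b > 0. Suppose the drift condition (DV3) holds: ∫ exp(V(y)) P(x, dy) ≤ exp( V(x) − W(x) + b ) for all x ∈ X. Then for all x⁻, x ∈ X: ∫ exp( V(y) + (1/2) W(x) ) P(x, dy) ≤ exp( [ V(x) + (1/2) W(x⁻) ] − [ 1 + (1/2)(W(x⁻) + W(x)) ] + (b + 1) ). That is, defining V₁(u, x⁻, x) := V(x) + (1/2) W(x⁻), W₁(u, x⁻, x) := 1 + (1/2)(W(x⁻) + W(x)), and b₁ := b + 1, the drift condition (DV3) holds for V₁, W₁, b₁ along transitions of the composite chain ζ_{k+1} = (U_k, Φ_k, Φ_{k+1})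 whose X-components move x⁻ ↦ x ↦ y with y ∼ P(x, ·). -/
open MeasureTheory ProbabilityTheory

/-- Lemma `QDV3b`: the drift condition (DV3) for the hidden-state
kernel `P` with data `(V, W, b)` implies the drift inequality with data
`V₁(u,x⁻,x) = V(x) + W(x⁻)/2`, `W₁(u,x⁻,x) = 1 + (W(x⁻)+W(x))/2`, `b₁ = b + 1`
along transitions `x⁻ ↦ x ↦ y`, `y ∼ P(x,·)`, of the composite chain. -/
theorem stmt_13
    {X : Type*} [MeasurableSpace X]
    (P : Kernel X X) [IsMarkovKernel P]
    (V W : X → ℝ) (hV : Measurable V) (hW : Measurable W)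
    (hV0 : ∀ x, 0 ≤ V x) (hW1 : ∀ x, 1 ≤ W x)
    (b : ℝ) (hb : 0 < b)
    (hDV3 : ∀ x, ∫⁻ y, ENNReal.ofReal (Real.exp (V y)) ∂(P x) ≤
      ENNReal.ofReal (Real.exp (V x - W x + b))) :
    ∀ xm x : X,
      ∫⁻ y, ENNReal.ofReal (Real.exp (V y + (1/2) * W x)) ∂(P x) ≤
        ENNReal.ofReal (Real.exp
          ((V x + (1/2) * W xm) - (1 + (1/2) * (W xm + W x)) + (b + 1))) := by
  intro xm x
  have key : ∀ y, ENNReal.ofReal (Real.exp (V y + (1/2) * W x)) =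
      ENNReal.ofReal (Real.exp (V y)) * ENNReal.ofReal (Real.exp ((1/2) * W x)) := by
    intro y
    rw [Real.exp_add, ENNReal.ofReal_mul (Real.exp_pos _).le]
  simp only [key]
  rw [lintegral_mul_const' _ _ ENNReal.ofReal_ne_top]
  calc (∫⁻ y, ENNReal.ofReal (Real.exp (V y)) ∂(P x)) *
        ENNReal.ofReal (Real.exp ((1/2) * W x))
      ≤ ENNReal.ofReal (Real.exp (V x - W x + b)) *
        ENNReal.ofReal (Real.exp ((1/2) * W x)) := by
        exact mul_le_mul_left (hDV3 x) _
    _ = ENNReal.ofReal (Real.exp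
          ((V x + (1/2) * W xm) - (1 + (1/2) * (W xm + W x)) + (b + 1))) := by
        rw [← ENNReal.ofReal_mul (Real.exp_pos _).le, ← Real.exp_add]
        ring_nf
end

section
/- Let Λ : ℝ → ℝ satisfy Λ(0) = 0, let m̄ ∈ ℝ and ρ ∈ ℝ, and suppose υ* > 0 satisfies m̄ υ* − Λ(υ*) ≥ m̄ υ − Λ(υ) for all υ ∈ ℝ (i.e., υ* maximizes υ ↦ m̄υ − Λ(υ)). Define r* := (ρ − Λ(υ*)) / υ*. Then: (i) Λ(υ*) + r* υ* = ρ, so υ* is a solution υ₊ of the shifted equation Λ(υ) + r*υ = ρ; and (ii) for every r ∈ ℝ and every υ > 0 satisfying Λ(υ) + r υ = ρ, one has (m̄ + r) υ ≤ (m̄ + r*) υ*. Consequently, among all shifts r, the shift r* maximizes the product (m̄ + r) υ₊(r), where υ₊(r) is any positive solution of Λ(υ) + rυ = ρ. -/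
/-!
On a solution `υ` of the shifted equation `Λ(υ) + rυ = ρ` the product `(m̄ + r)υ` equals
`m̄υ − Λ(υ) + ρ`: the shift drops out, so maximizing the product over shifts is maximizing
`υ ↦ m̄υ − Λ(υ)`, which `υ*` does.
-/

lemma add_mul_eq_of_shifted_eq {Λ : ℝ → ℝ} {m ρ r υ : ℝ} (h : Λ υ + r * υ = ρ) :
    (m + r) * υ = m * υ - Λ υ + ρ := by
  linear_combination h

theorem stmt_15_general
    (Λ : ℝ → ℝ)
    (mbar ρ : ℝ)
    (υstar : ℝ) (hυ : 0 < υstar)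
    (hmax : ∀ υ : ℝ, mbar * υ - Λ υ ≤ mbar * υstar - Λ υstar)
    (rstar : ℝ) (hrstar : rstar = (ρ - Λ υstar) / υstar) :
    (Λ υstar + rstar * υstar = ρ) ∧
    (∀ r υ : ℝ, 0 < υ → Λ υ + r * υ = ρ →
      (mbar + r) * υ ≤ (mbar + rstar) * υstar) := by
  have hsolves : Λ υstar + rstar * υstar = ρ := by
    rw [hrstar, div_mul_cancel₀ _ hυ.ne']
    ring
  refine ⟨hsolves, fun r υ _ hshift => ?_⟩
  calc (mbar + r) * υ = mbar * υ - Λ υ + ρ := add_mul_eq_of_shifted_eq hshift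
    _ ≤ mbar * υstar - Λ υstar + ρ := by linarith [hmax υ]
    _ = (mbar + rstar) * υstar := (add_mul_eq_of_shifted_eq hsolves).symm

/-- optimality of the shift `r* = (ρ − Λ(υ*))/υ*`: `υ*` solves the shifted
equation `Λ(υ) + r*υ = ρ`, and among all shifts `r` with positive solution `υ` of
`Λ(υ) + rυ = ρ`, the product `(m̄ + r)υ` is maximized at `(r*, υ*)`. -/
theorem stmt_15
    (Λ : ℝ → ℝ) (hΛ0 : Λ 0 = 0)
    (mbar ρ : ℝ)
    (υstar : ℝ) (hυ : 0 < υstar)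
    (hmax : ∀ υ : ℝ, mbar * υ - Λ υ ≤ mbar * υstar - Λ υstar)
    (rstar : ℝ) (hrstar : rstar = (ρ - Λ υstar) / υstar) :
    (Λ υstar + rstar * υstar = ρ) ∧
    (∀ r υ : ℝ, 0 < υ → Λ υ + r * υ = ρ →
      (mbar + r) * υ ≤ (mbar + rstar) * υstar) :=
  stmt_15_general Λ mbar ρ υstar hυ hmax rstar hrstar
end

section
/- Fix constants m₁ > 0, υ₊ > 0, c > 0, and h₀ > 0, and for κ > 0 and h > 0 define J̄_∞(κ, h) := h/m₁ + κ c √h e^{−h υ₊}. Then for all sufficiently large κ the infimum of J̄_∞(κ, ·) over [h₀, ∞) is attained, and any family of minimizers h*(κ) ∈ argmin_{h ≥ h₀} J̄_∞(κ, h) satisfies lim_{κ→∞} h*(κ) / ( (log κ)/υ₊ ) = 1 and lim_{κ→∞} J̄_∞(κ, h*(κ)) / ( (log κ)/(m₁ υ₊) ) = 1. -/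
/-!
Write `L = log κ`, so that `κ e^{-h υ₊} = e^{L - h υ₊}`. At the threshold `(1 + δ) L / υ₊` the
exponential term is `O(√L e^{-δL})`, so the optimal cost is eventually below
`(1 + 2δ) L / (m₁ υ₊)`. A threshold `h ≤ (1 - δ) L / υ₊` costs at least `c √h₀ e^{δL}`, which
eventually exceeds that bound, so minimizers satisfy `h* > (1 - δ) L / υ₊`. As the cost dominates
`h / m₁`, this squeezes `1 - δ < h* / (L / υ₊) ≤ J̄_∞(κ, h*) / (L / (m₁ υ₊)) < 1 + 2δ`.
-/

open Filter Real Set Topology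

theorem tendsto_nhds_of_le_of_bounds {α β : Type*} [LinearOrder β] [TopologicalSpace β]
    [OrderTopology β] {l : Filter α} {u v : α → β} {b : β} (huv : ∀ᶠ x in l, u x ≤ v x)
    (hu : ∀ a < b, ∀ᶠ x in l, a < u x) (hv : ∀ a > b, ∀ᶠ x in l, v x < a) :
    Tendsto u l (𝓝 b) ∧ Tendsto v l (𝓝 b) := by
  refine ⟨tendsto_order.2 ⟨hu, fun a ha => ?_⟩, tendsto_order.2 ⟨fun a ha => ?_, hv⟩⟩
  · filter_upwards [huv, hv a ha] with x h₁ h₂ using h₁.trans_lt h₂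
  · filter_upwards [huv, hu a ha] with x h₁ h₂ using h₂.trans_le h₁

theorem eventually_mul_lt_mul_exp {b K : ℝ} (hb : 0 < b) (hK : 0 < K) (C : ℝ) :
    ∀ᶠ x in atTop, C * x < K * exp (b * x) := by
  have h := tendsto_exp_mul_div_rpow_atTop 1 b hb
  simp only [rpow_one] at h
  filter_upwards [h.eventually_gt_atTop (C / K), eventually_gt_atTop 0] with x hx hx₀
  rw [div_lt_div_iff₀ hK hx₀] at hx
  linarith

noncomputable def barJ (m υ c κ h : ℝ) : ℝ := h / m + κ * c * √h * exp (-(h * υ))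

section barJ

variable {m υ c κ h : ℝ}

theorem barJ_eq_of_pos (hκ : 0 < κ) :
    barJ m υ c κ h = h / m + c * √h * exp (log κ - h * υ) := by
  rw [barJ, sub_eq_add_neg, exp_add, exp_log hκ]
  ring

theorem div_le_barJ (hκ : 0 ≤ κ) (hc : 0 ≤ c) : h / m ≤ barJ m υ c κ h :=
  le_add_of_nonneg_right (by positivity)

theorem exists_isMinOn_barJ (hm : 0 < m) (hκ : 0 ≤ κ) (hc : 0 ≤ c) (h₀ : ℝ) :
    ∃ h, h₀ ≤ h ∧ IsMinOn (barJ m υ c κ) (Ici h₀) h := by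
  have hcont : Continuous (barJ m υ c κ) := by unfold barJ; fun_prop
  have htop : Tendsto (barJ m υ c κ) atTop atTop :=
    tendsto_atTop_mono (fun h => div_le_barJ hκ hc) (tendsto_id.atTop_div_const hm)
  refine hcont.continuousOn.exists_isMinOn' (s := Ici h₀) isClosed_Ici (mem_Ici.2 le_rfl) ?_
  rw [eventually_inf_principal]
  refine (cocompact_le_atBot_atTop : cocompact ℝ ≤ _) (eventually_sup.2 ⟨?_, ?_⟩)
  · filter_upwards [eventually_lt_atBot h₀] with x hx hx' using absurd hx' (not_le.2 hx)
  · filter_upwards [htop.eventually_ge_atTop (barJ m υ c κ h₀)] with x hx _ using hx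

theorem eventually_exists_barJ_lt (hm : 0 < m) (hυ : 0 < υ) (hc : 0 ≤ c) (h₀ : ℝ) {a : ℝ}
    (ha : 1 < a) :
    ∀ᶠ κ in atTop, ∃ t, h₀ ≤ t ∧ barJ m υ c κ t < a * (log κ / (m * υ)) := by
  set δ := (a - 1) / 2
  have hδ : 0 < δ := by positivity
  have hlin {k : ℝ} (hk : 0 < k) : Tendsto (fun L : ℝ => k * L) atTop atTop :=
    tendsto_id.const_mul_atTop hk
  filter_upwards [eventually_gt_atTop 0,
    tendsto_log_atTop.eventually <|
      (hlin (k := (1 + δ) / υ) (by positivity)).eventually_ge_atTop (max h₀ 1),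
    tendsto_log_atTop.eventually <| eventually_mul_lt_mul_exp hδ one_pos (c * ((1 + δ) / υ)),
    tendsto_log_atTop.eventually <|
      (hlin (k := δ / (m * υ)) (by positivity)).eventually_ge_atTop 1] with κ hκ ht hexp hlog
  set t := (1 + δ) / υ * log κ
  refine ⟨t, le_of_max_le_left ht, ?_⟩
  have ht₁ : 1 ≤ t := le_of_max_le_right ht
  have hsqrt : √t ≤ t := (sqrt_le_left (by positivity)).2 (by nlinarith)
  have hrem : c * √t * exp (log κ - t * υ) < δ / (m * υ) * log κ := by
    have : log κ - t * υ = -(δ * log κ) := by simp only [t]; field_simp; ring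
    rw [this, exp_neg, ← div_eq_mul_inv, div_lt_iff₀ (exp_pos _)]
    calc c * √t < 1 * exp (δ * log κ) := (mul_le_mul_of_nonneg_left hsqrt hc).trans_lt
          (by simpa only [t, mul_assoc] using hexp)
      _ ≤ _ := by gcongr
  have hsplit : a * (log κ / (m * υ)) = t / m + δ / (m * υ) * log κ := by
    simp only [t, δ]; field_simp; ring
  rw [barJ_eq_of_pos hκ, hsplit]
  linarith

theorem eventually_lt_barJ (hm : 0 < m) (hυ : 0 < υ) (hc : 0 < c) {h₀ : ℝ} (hh₀ : 0 < h₀)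
    (C : ℝ) {a : ℝ} (ha : a < 1) :
    ∀ᶠ κ in atTop, ∀ h, h₀ ≤ h → h ≤ a * (log κ / υ) → C * log κ < barJ m υ c κ h := by
  have hb : 0 < 1 - a := by linarith
  have hK : 0 < c * √h₀ := by positivity
  filter_upwards [tendsto_log_atTop.eventually (eventually_mul_lt_mul_exp hb hK C),
    eventually_gt_atTop 0] with κ hκ hκ₀ h hh₀h hha
  have hexp : (1 - a) * log κ ≤ log κ - h * υ := by
    have : h * υ ≤ a * log κ := by rwa [← mul_div_assoc, le_div_iff₀ hυ] at hha
    linarith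
  calc C * log κ < c * √h₀ * exp ((1 - a) * log κ) := hκ
    _ ≤ c * √h * exp (log κ - h * υ) := by gcongr
    _ ≤ barJ m υ c κ h := by
      rw [barJ_eq_of_pos hκ₀]
      exact le_add_of_nonneg_left (div_nonneg (hh₀.trans_le hh₀h).le hm.le)

theorem eventually_mul_lt_of_isMinOn_barJ (hm : 0 < m) (hυ : 0 < υ) (hc : 0 < c) {h₀ : ℝ}
    (hh₀ : 0 < h₀) {a : ℝ} (ha : a < 1) :
    ∀ᶠ κ in atTop, ∀ h, h₀ ≤ h → IsMinOn (barJ m υ c κ) (Ici h₀) h → a * (log κ / υ) < h := by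
  filter_upwards [eventually_exists_barJ_lt hm hυ hc.le h₀ one_lt_two,
    eventually_lt_barJ hm hυ hc hh₀ (2 / (m * υ)) ha] with κ ⟨t, ht, hJt⟩ hJlow h hh hmin
  by_contra! hsmall
  have hJmin : barJ m υ c κ h ≤ barJ m υ c κ t := hmin ht
  have := hJlow h hh hsmall
  rw [div_mul_eq_mul_div, mul_div_assoc] at this
  linarith

end barJ

/-- for `J̄_∞(κ,h) = h/m₁ + κ c √h e^{−hυ₊}`, for all large `κ` the
infimum over `[h₀,∞)` is attained, and any family of minimizers `h*(κ)` satisfies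
`h*(κ) ∼ (log κ)/υ₊` and `J̄_∞(κ, h*(κ)) ∼ (log κ)/(m₁ υ₊)` as `κ → ∞`. -/
theorem stmt_16
    (m₁ υp c h₀ : ℝ) (hm : 0 < m₁) (hυ : 0 < υp) (hc : 0 < c) (hh₀ : 0 < h₀)
    (J : ℝ → ℝ → ℝ)
    (hJ : ∀ κ h, J κ h = h / m₁ + κ * c * Real.sqrt h * Real.exp (-(h * υp))) :
    (∀ᶠ κ in atTop, ∃ h : ℝ, h₀ ≤ h ∧ IsMinOn (J κ) (Set.Ici h₀) h) ∧
    ∀ hstar : ℝ → ℝ,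
      (∀ᶠ κ in atTop, h₀ ≤ hstar κ ∧ IsMinOn (J κ) (Set.Ici h₀) (hstar κ)) →
      Tendsto (fun κ => hstar κ / (Real.log κ / υp)) atTop (nhds 1) ∧
      Tendsto (fun κ => J κ (hstar κ) / (Real.log κ / (m₁ * υp))) atTop (nhds 1) := by
  obtain rfl : J = barJ m₁ υp c := funext₂ hJ
  refine ⟨?_, fun hstar hmin => ?_⟩
  · filter_upwards [eventually_ge_atTop 0] with κ hκ using exists_isMinOn_barJ hm hκ hc.le h₀
  have hlog : ∀ᶠ κ in atTop, 0 < log κ := tendsto_log_atTop.eventually_gt_atTop 0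
  have hle : ∀ᶠ κ in atTop,
      hstar κ / (log κ / υp) ≤ barJ m₁ υp c κ (hstar κ) / (log κ / (m₁ * υp)) := by
    filter_upwards [hlog, eventually_ge_atTop 0] with κ hL hκ
    rw [show hstar κ / (log κ / υp) = hstar κ / m₁ / (log κ / (m₁ * υp)) by field_simp]
    gcongr
    exact div_le_barJ hκ hc.le
  have hupper : ∀ a > 1, ∀ᶠ κ in atTop, barJ m₁ υp c κ (hstar κ) / (log κ / (m₁ * υp)) < a := by
    intro a ha
    filter_upwards [hmin, hlog, eventually_exists_barJ_lt hm hυ hc.le h₀ ha]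
      with κ hκ hL ⟨t, ht, hJt⟩
    rw [div_lt_iff₀ (by positivity)]
    exact (hκ.2 ht).trans_lt hJt
  have hlower : ∀ a < 1, ∀ᶠ κ in atTop, a < hstar κ / (log κ / υp) := by
    intro a ha
    filter_upwards [hmin, hlog, eventually_mul_lt_of_isMinOn_barJ hm hυ hc hh₀ ha]
      with κ hκ hL hκlow
    rw [lt_div_iff₀ (by positivity)]
    exact hκlow _ hκ.1 hκ.2
  exact tendsto_nhds_of_le_of_bounds hle hlower hupper
end
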